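/- Let L = ℚ(k,l,m,n,p,q,r,c) be the field of rational functions over ℚ in the indeterminates k,l,m,n,p,q,r,c, and work in L[x,y] with T = x + y + c. Let P = k·y² − 2(q−m)·x·y − 2r·x·T + 2l·y³ + y·q·T + r·T² + 2n·y²·T + 2p·y·T² and Q = 2·( (m−k−q)·x·y − (m+r)·x·T + l·y³ + (p−n)·y·T² + (n−l)·y²·T − p·T³ ) (a general member of Żołądek's family CR₁₂). Then the quadratic polynomial H = k·y² + q·T·y + r·T², which is a product of two linear forms defining two integral lines, is an algebraic integral curve of P dx + Q dy: H divides P·∂H/∂y − Q·∂H/∂x in L[x,y]. -/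
import Mathlib


open MvPolynomial

/-- The field `L = ℚ(k,l,m,n,p,q,r,c)` of rational functions over `ℚ` in eight
indeterminates, realized as the fraction field of `ℚ[k,l,m,n,p,q,r,c]`. -/
abbrev L12 : Type := FractionRing (MvPolynomial (Fin 8) ℚ)

/-- The `i`-th indeterminate parameter (in the order `k,l,m,n,p,q,r,c`), as an element of `L`. -/
noncomputable def prm (i : Fin 8) : L12 :=
  algebraMap (MvPolynomial (Fin 8) ℚ) L12 (X i)

namespace CR12lines

noncomputable def k : L12 := prm 0
noncomputable def l : L12 := prm 1
noncomputable def m : L12 := prm 2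
noncomputable def n : L12 := prm 3
noncomputable def p : L12 := prm 4
noncomputable def q : L12 := prm 5
noncomputable def r : L12 := prm 6
noncomputable def c : L12 := prm 7

noncomputable def x : MvPolynomial (Fin 2) L12 := X 0
noncomputable def y : MvPolynomial (Fin 2) L12 := X 1

/-- `T = x + y + c`. -/
noncomputable def T : MvPolynomial (Fin 2) L12 := x + y + C c

/-- The coefficient polynomial `P` of Żołądek's family `CR₁₂`. -/
noncomputable def P : MvPolynomial (Fin 2) L12 :=
  C k * y^2 - 2 * (C q - C m) * x * y - 2 * C r * x * T + 2 * C l * y^3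
    + y * C q * T + C r * T^2 + 2 * C n * y^2 * T + 2 * C p * y * T^2

/-- The coefficient polynomial `Q` of Żołądek's family `CR₁₂`. -/
noncomputable def Q : MvPolynomial (Fin 2) L12 :=
  2 * ((C m - C k - C q) * x * y - (C m + C r) * x * T + C l * y^3
    + (C p - C n) * y * T^2 + (C n - C l) * y^2 * T - C p * T^3)

/-- The quadratic polynomial `H = k·y² + q·T·y + r·T²`, a product of two linear forms
defining Żołądek's two integral lines for the family `CR₁₂` (correcting a misprint in
Żołądek's paper, where it is given as `k·y² + p·T·y + q·T²`). -/
noncomputable def H : MvPolynomial (Fin 2) L12 :=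
  C k * y^2 + C q * T * y + C r * T^2

/-- The cofactor `K`. -/
noncomputable def K : MvPolynomial (Fin 2) L12 :=
  4 * C p * T^2 + 4 * C n * y * T + 4 * C l * y^2 + 2 * C k * y
    + (4 * C m + 2 * C r - C q) * x + (2 * C q + 2 * C r) * y + (C q + 2 * C r) * C c

/-- **The pair of lines `H = 0` is an algebraic integral curve of the general member of
Żołądek's family `CR₁₂`**: `H` divides `P·H_y − Q·H_x` in `L[x,y]`. -/
theorem lines_are_integral_curve : H ∣ P * pderiv 1 H - Q * pderiv 0 H := by
  refine ⟨K, ?_⟩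
  have hy : pderiv 1 H = 2 * C k * y + C q * T + C q * y + 2 * C r * T := by
    simp only [H, T, x, y, map_add, map_mul, pderiv_C, pderiv_X, pderiv_pow]
    simp [Pi.single_apply]
    ring
  have hx : pderiv 0 H = C q * y + 2 * C r * T := by
    simp only [H, T, x, y, map_add, map_mul, pderiv_C, pderiv_X, pderiv_pow]
    simp [Pi.single_apply]
    ring
  rw [hx, hy, P, Q, H, K, T]
  ring

end CR12lines
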